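/- Let q = p^m be an odd prime power, let n ≥ 2, and let C be an extended 1-perfect code in the Hamming graph H(n,q). Then n = (q^l + q − 2)/(q − 1) for some odd positive integer l. -/

import Mathlib

/-- The Hamming graph `H(n,q)`: vertices are `Fin n → ZMod q`, two vertices are
adjacent iff their Hamming distance is `1`. -/
def hammingGraph (n q : ℕ) : SimpleGraph (Fin n → ZMod q) where
  Adj x y := hammingDist x y = 1
  symm := ⟨by intro x y h; rwa [hammingDist_comm]⟩
  loopless := ⟨by intro x h; simp [hammingDist_self] at h⟩

/-- The distance from a vertex `x` to a code `C` in a graph `G`. -/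
noncomputable def distToCode {V : Type*} (G : SimpleGraph V) (C : Set V) (x : V) : ℕ :=
  sInf {d : ℕ | ∃ c ∈ C, G.dist x c = d}

/-- The code distance of a code `C` in a graph `G`: the minimum distance between
two distinct codewords. -/
noncomputable def codeDist {V : Type*} (G : SimpleGraph V) (C : Set V) : ℕ :=
  sInf {d : ℕ | ∃ x ∈ C, ∃ y ∈ C, x ≠ y ∧ G.dist x y = d}

/-- A code `C` is `1`-perfect if every vertex is at distance at most `1`
from exactly one codeword. -/
def IsOnePerfect {V : Type*} (G : SimpleGraph V) (C : Set V) : Prop :=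
  ∀ x, ∃! c, c ∈ C ∧ G.dist x c ≤ 1

/-- Deleting the `i`-th coordinate of a tuple. -/
def deleteCoord {α : Type*} {n : ℕ} (i : Fin n) (c : Fin n → α) (j : Fin (n - 1)) : α :=
  c (Fin.cast (show n - 1 + 1 = n by have := i.pos; omega)
      ((Fin.cast (show n = n - 1 + 1 by have := i.pos; omega) i).succAbove j))

/-- The projection (puncturing) of a code in `H(n,q)` at coordinate `i`. -/
def hammingProj {n q : ℕ} (i : Fin n) (C : Set (Fin n → ZMod q)) :
    Set (Fin (n - 1) → ZMod q) :=
  (deleteCoord i) '' C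

/-- A code `C` in `H(n,q)` is extended `1`-perfect if it is nonempty, its code distance
is `4`, and its projection at some coordinate is a `1`-perfect code in `H(n-1,q)`. -/
def IsExtOnePerfectH (n q : ℕ) (C : Set (Fin n → ZMod q)) : Prop :=
  C.Nonempty ∧ codeDist (hammingGraph n q) C = 4 ∧
    ∃ i : Fin n, IsOnePerfect (hammingGraph (n - 1) q) (hammingProj i C)

/-- A perfect coloring of `G` in `k` colors with quotient matrix `S`: a surjective map
`f` onto the colors such that every vertex of color `i` has exactly `S i j` neighbours
of color `j`. -/
def IsPerfectColoring {V : Type*} (G : SimpleGraph V) {k : ℕ} (f : V → Fin k)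
    (S : Matrix (Fin k) (Fin k) ℤ) : Prop :=
  Function.Surjective f ∧
    ∀ v j, (({u | G.Adj v u ∧ f u = j} : Set V).ncard : ℤ) = S (f v) j

/-- A code `C` in `G` is completely regular with quotient matrix `S` if the distance
coloring `x ↦ d(x, C)` is a perfect coloring with quotient matrix `S`. -/
def IsCompletelyRegular {V : Type*} (G : SimpleGraph V) (C : Set V) {k : ℕ}
    (S : Matrix (Fin k) (Fin k) ℤ) : Prop :=
  ∃ h : ∀ x, distToCode G C x < k,
    IsPerfectColoring G (fun x => (⟨distToCode G C x, h x⟩ : Fin k)) S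

/-- The connecting set of the Shrikhande graph as a Cayley graph on `ℤ₄ × ℤ₄`. -/
def shrikhandeSet : Set (ZMod 4 × ZMod 4) :=
  {(0, 1), (1, 0), (0, 3), (3, 0), (1, 1), (3, 3)}

/-- The vertex set of the graph `D(m,n)`. -/
abbrev DoobV (m n : ℕ) := (Fin m → ZMod 4 × ZMod 4) × (Fin n → ZMod 4)

/-- The graph `D(m,n)`: the direct product of `m` copies of the Shrikhande graph and
`n` copies of `K₄`. Two vertices are adjacent iff they differ in exactly one
coordinate and, if it is a Shrikhande coordinate, the difference there lies in the
connecting set. For `m > 0` it is a Doob graph; `D(0,n) = H(n,4)`. -/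
def doobGraph (m n : ℕ) : SimpleGraph (DoobV m n) :=
  SimpleGraph.fromRel (fun x y =>
    (∃ i, x.1 i - y.1 i ∈ shrikhandeSet ∧ (∀ j, j ≠ i → x.1 j = y.1 j) ∧ x.2 = y.2) ∨
    (∃ i, x.2 i ≠ y.2 i ∧ (∀ j, j ≠ i → x.2 j = y.2 j) ∧ x.1 = y.1))

/-- The projection (puncturing) of a code in `D(m,n)` at the `K₄` coordinate `i`. -/
def doobProj {m n : ℕ} (i : Fin n) (C : Set (DoobV m n)) : Set (DoobV m (n - 1)) :=
  (fun x => (x.1, deleteCoord i x.2)) '' C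

/-- A code `C` in `D(m,n)`, `n ≥ 1`, is extended `1`-perfect if it is nonempty, its code
distance is `4`, and its projection at some `K₄` coordinate is a `1`-perfect code in
`D(m,n-1)`. A code `C` in `D(m,0)` is extended `1`-perfect if it is nonempty, its code
distance is `4`, and `2m = (4^l+2)/3` and `|C| = 4^(2m-l-1)` for some `l ≥ 1`. -/
def IsExtOnePerfectD (m n : ℕ) (C : Set (DoobV m n)) : Prop :=
  C.Nonempty ∧ codeDist (doobGraph m n) C = 4 ∧
    (if n = 0 then
        ∃ l : ℕ, 0 < l ∧ 3 * (2 * m) = 4 ^ l + 2 ∧ C.ncard = 4 ^ (2 * m - l - 1)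
      else ∃ i : Fin n, IsOnePerfect (doobGraph m (n - 1)) (doobProj i C))

/-!
Puncturing `C` at the coordinate `i` gives a `1`-perfect code `P` in `H(n-1,q)`; the deleted
symbol colours `P` so that codewords at distance `3` get distinct colours, since `C` has
minimum distance `4`.

The balls of radius `1` around `P` tile `H(n-1,q)`, so `1 + (n-1)(q-1)` divides `q^(n-1)`;
being `≡ 1 mod q-1`, it is a power `q^l`. For odd `q`, `n-1 = 1 + q + ⋯ + q^(l-1) ≡ l mod 2`.

It remains to see that `n-1` is odd. Fix `p₀ ∈ P`, a coordinate `j`, a symbol `β ≠ p₀ j` and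
a colour `v ≠ f p₀`. The codewords at distance `3` from `p₀` with value `β` at `j` and colour
`v` each differ from `p₀` in exactly two coordinates other than `j`, and every coordinate
other than `j` is hit by exactly one of them, so their number is `(n-2)/2`.
-/

open Finset Function

section Hamming
variable {ι α : Type*} [Fintype ι] [DecidableEq α]

lemma hammingDist_eq_sum (x y : ι → α) :
    hammingDist x y = ∑ s, if x s ≠ y s then 1 else 0 :=
  card_filter _ _

lemma hammingDist_update_add [DecidableEq ι] (x y : ι → α) (s : ι) (b : α) :
    hammingDist (update x s b) y + (if x s ≠ y s then 1 else 0) =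
      hammingDist x y + (if b ≠ y s then 1 else 0) := by
  rw [hammingDist_eq_sum, hammingDist_eq_sum, ← add_sum_erase _ _ (mem_univ s),
    ← add_sum_erase _ _ (mem_univ s), update_self,
    sum_congr rfl fun t ht => by rw [update_of_ne (ne_of_mem_erase ht)]]
  ring

lemma hammingDist_update_add_one [DecidableEq ι] {x y : ι → α} {s : ι} (hs : x s ≠ y s) :
    hammingDist (update x s (y s)) y + 1 = hammingDist x y := by
  simpa [hs] using hammingDist_update_add x y s (y s)

lemma hammingDist_update_self [DecidableEq ι] {x : ι → α} {s : ι} {b : α} (hb : b ≠ x s) :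
    hammingDist (update x s b) x = 1 := by
  simpa [hb] using hammingDist_update_add x x s b

lemma hammingDist_lt_add_of_ne_of_ne {x y z : ι → α} {s : ι} (hxy : x s ≠ y s)
    (hyz : y s ≠ z s) : hammingDist x z < hammingDist x y + hammingDist y z := by
  simp only [hammingDist_eq_sum, ← sum_add_distrib]
  refine sum_lt_sum (fun t _ => ?_) ⟨s, mem_univ s, ?_⟩ <;> split_ifs <;> simp_all

lemma hammingDist_add_card_add_card_le [DecidableEq ι] {x y p : ι → α} {T T' : Finset ι}
    (hT' : T' ⊆ T) (hT : ∀ s ∈ T, x s ≠ p s ∧ y s ≠ p s) (hagree : ∀ s ∈ T', x s = y s) :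
    hammingDist x y + #T + #T' ≤ hammingDist x p + hammingDist y p := by
  have hcard (S : Finset ι) : #S = ∑ s, if s ∈ S then 1 else 0 := by simp
  simp only [hammingDist_eq_sum, hcard, ← sum_add_distrib]
  refine sum_le_sum fun s _ => ?_
  have := hT s
  have := hagree s
  have := @hT' s
  split_ifs <;> simp_all

end Hamming

section Graph
variable {n q : ℕ}

lemma hammingGraph_exists_walk_length_le (x y : Fin n → ZMod q) :
    ∃ w : (hammingGraph n q).Walk x y, w.length ≤ hammingDist x y := by
  induction h : hammingDist x y generalizing x with
  | zero => obtain rfl := hammingDist_eq_zero.mp h; exact ⟨.nil, le_rfl⟩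
  | succ d ih =>
    obtain ⟨s, hs⟩ := Function.ne_iff.mp (hammingDist_ne_zero.mp (by omega) : x ≠ y)
    have hstep := hammingDist_update_add_one hs
    obtain ⟨w, hw⟩ := ih (update x s (y s)) (by omega)
    have hadj : (hammingGraph n q).Adj x (update x s (y s)) := by
      show hammingDist _ _ = 1
      rw [hammingDist_comm]; exact hammingDist_update_self (Ne.symm hs)
    exact ⟨.cons hadj w, by simp; omega⟩

lemma hammingDist_le_length {x y : Fin n → ZMod q} (w : (hammingGraph n q).Walk x y) :
    hammingDist x y ≤ w.length := by
  induction w with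
  | nil => simp
  | cons hadj w ih =>
    rw [SimpleGraph.Walk.length_cons]
    exact (hammingDist_triangle _ _ _).trans (by rw [show hammingDist _ _ = 1 from hadj]; omega)

lemma hammingGraph_dist (x y : Fin n → ZMod q) :
    (hammingGraph n q).dist x y = hammingDist x y := by
  obtain ⟨w, hw⟩ := hammingGraph_exists_walk_length_le x y
  obtain ⟨w', hw'⟩ := w.reachable.exists_walk_length_eq_dist
  exact le_antisymm ((SimpleGraph.dist_le w).trans hw) (hw' ▸ hammingDist_le_length w')

end Graph

lemma hammingDist_eq_deleteCoord_add {α : Type*} [DecidableEq α] {n : ℕ} (i : Fin n)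
    (c c' : Fin n → α) :
    hammingDist c c' =
      hammingDist (deleteCoord i c) (deleteCoord i c') + if c i ≠ c' i then 1 else 0 := by
  obtain ⟨N, rfl⟩ : ∃ N, n = N + 1 := ⟨n - 1, by have := i.pos; omega⟩
  rw [hammingDist_eq_sum, hammingDist_eq_sum, Fin.sum_univ_succAbove _ i, add_comm]
  -- once `n = N + 1`, the casts in `deleteCoord` are identities
  rfl

section PerfectCode
variable {ι α : Type*} [Fintype ι] [DecidableEq ι] [DecidableEq α]

def IsOnePerfectHamming (P : Set (ι → α)) : Prop :=
  ∀ y, ∃! c, c ∈ P ∧ hammingDist y c ≤ 1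

lemma exists_eq_update_of_hammingDist_eq_one {x p : ι → α} (h : hammingDist x p = 1) :
    ∃ s, x s ≠ p s ∧ x = update p s (x s) := by
  obtain ⟨s, hs⟩ := Function.ne_iff.mp (hammingDist_ne_zero.mp (by omega) : x ≠ p)
  have hstep := hammingDist_update_add_one hs
  have hp : update x s (p s) = p := hammingDist_eq_zero.mp (by omega)
  exact ⟨s, hs, by rw [← hp, update_idem, update_eq_self]⟩

lemma card_hammingDist_le_one [Fintype α] (p : ι → α) :
    #{x | hammingDist x p ≤ 1} = 1 + Fintype.card ι * (Fintype.card α - 1) := by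
  set S := (univ : Finset ι).sigma fun s => univ.erase (p s)
  have hball : ({x | hammingDist x p ≤ 1} : Finset (ι → α)) =
      insert p (S.image fun e => update p e.1 e.2) := by
    ext x
    simp only [mem_filter, mem_univ, true_and, mem_insert, mem_image, S, mem_sigma, mem_erase,
      and_true]
    constructor
    · intro h
      rcases Nat.le_one_iff_eq_zero_or_eq_one.mp h with h | h
      · exact .inl (hammingDist_eq_zero.mp h)
      · obtain ⟨s, hs, hx⟩ := exists_eq_update_of_hammingDist_eq_one h
        exact .inr ⟨⟨s, x s⟩, hs, hx.symm⟩
    · rintro (rfl | ⟨⟨s, b⟩, hb, rfl⟩)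
      · simp
      · exact (hammingDist_update_self hb).le
  have hinj : Set.InjOn (fun e : Σ _ : ι, α => update p e.1 e.2) S := by
    rintro ⟨s, b⟩ hb ⟨t, c⟩ hc h
    simp only [S, coe_sigma, Set.mem_sigma_iff, mem_coe, mem_univ, mem_erase, true_and,
      and_true] at hb hc
    obtain rfl : s = t := by
      by_contra hst
      exact hb (by simpa [update_of_ne hst] using congrFun h s)
    simpa using congrFun h s
  have hp : p ∉ S.image fun e => update p e.1 e.2 := by
    simp only [mem_image, S, mem_sigma, mem_univ, mem_erase, true_and, and_true, not_exists,
      not_and]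
    exact fun ⟨s, b⟩ hb h => hb (by simpa using congrFun h s)
  rw [hball, card_insert_of_notMem hp, card_image_of_injOn hinj, card_sigma]
  simp [card_erase_of_mem, add_comm]

lemma IsOnePerfectHamming.card_mul_eq_card_pow [Fintype α] {P : Set (ι → α)} [DecidablePred (· ∈ P)]
    (hP : IsOnePerfectHamming P) :
    #{c | c ∈ P} * (1 + Fintype.card ι * (Fintype.card α - 1)) =
      Fintype.card α ^ Fintype.card ι := by
  have := card_mul_eq_card_mul (fun c y => hammingDist y c ≤ 1)
    (s := {c | c ∈ P}) (t := univ) (m := 1 + Fintype.card ι * (Fintype.card α - 1)) (n := 1)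
    (fun c _ => by simp [bipartiteAbove, card_hammingDist_le_one])
    (fun y _ => by
      obtain ⟨c, hc, huniq⟩ := hP y
      rw [card_eq_one]
      exact ⟨c, by ext c'; simpa [bipartiteBelow] using ⟨fun h => huniq c' h, fun h => h ▸ hc⟩⟩)
  simpa using this

lemma IsOnePerfectHamming.three_le_hammingDist {P : Set (ι → α)} (hP : IsOnePerfectHamming P)
    {c c' : ι → α} (hc : c ∈ P) (hc' : c' ∈ P) (hne : c ≠ c') : 3 ≤ hammingDist c c' := by
  by_contra! hlt
  obtain ⟨y, hyc, hyc'⟩ : ∃ y, hammingDist y c ≤ 1 ∧ hammingDist y c' ≤ 1 := by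
    by_cases h1 : hammingDist c c' ≤ 1
    · exact ⟨c, by simp, h1⟩
    · obtain ⟨s, hs⟩ := Function.ne_iff.mp hne
      have hstep := hammingDist_update_add_one hs
      exact ⟨update c s (c' s), (hammingDist_update_self (Ne.symm hs)).le, by omega⟩
  exact hne ((hP y).unique ⟨hc, hyc⟩ ⟨hc', hyc'⟩)

end PerfectCode

section Parity
variable {ι α : Type*} [Fintype ι] [DecidableEq ι] [DecidableEq α] {P : Set (ι → α)}

lemma IsOnePerfectHamming.agree_of_hammingDist_eq_two (hP : IsOnePerfectHamming P)
    {p₀ z c : ι → α} (hp₀ : p₀ ∈ P) (hc : c ∈ P) (hzc : hammingDist z c ≤ 1)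
    (hz : hammingDist z p₀ = 2) : hammingDist c p₀ = 3 ∧ ∀ s, z s ≠ p₀ s → c s = z s := by
  have hne : c ≠ p₀ := by rintro rfl; omega
  have h3 := hP.three_le_hammingDist hc hp₀ hne
  have htri := hammingDist_triangle c z p₀
  rw [hammingDist_comm c z] at htri
  refine ⟨by omega, fun s hs => ?_⟩
  by_contra hcs
  have hlt := hammingDist_lt_add_of_ne_of_ne hcs hs
  rw [hammingDist_comm c z] at hlt
  omega

lemma IsOnePerfectHamming.exists_hammingDist_eq_three (hP : IsOnePerfectHamming P)
    {p₀ : ι → α} (hp₀ : p₀ ∈ P) {j a : ι} (hja : j ≠ a) {β b : α} (hβ : β ≠ p₀ j)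
    (hb : b ≠ p₀ a) : ∃ c ∈ P, hammingDist c p₀ = 3 ∧ c j = β ∧ c a = b := by
  set z := update (update p₀ j β) a b
  have hz : hammingDist z p₀ = 2 := by
    have := hammingDist_update_add (update p₀ j β) p₀ a b
    simp only [update_of_ne hja.symm, ne_eq, not_true_eq_false, if_false, hb, not_false_eq_true,
      if_true, hammingDist_update_self hβ] at this
    omega
  obtain ⟨c, ⟨hc, hzc⟩, -⟩ := hP z
  obtain ⟨h3, hagree⟩ := hP.agree_of_hammingDist_eq_two hp₀ hc hzc hz
  refine ⟨c, hc, h3, ?_, ?_⟩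
  · simpa [z, hja] using hagree j (by simpa [z, hja] using hβ)
  · simpa [z] using hagree a (by simpa [z] using hb)

lemma IsOnePerfectHamming.eq_of_apply_eq (hP : IsOnePerfectHamming P) {f : (ι → α) → α}
    (hf : ∀ c ∈ P, ∀ c' ∈ P, hammingDist c c' = 3 → f c ≠ f c') {p₀ r r' : ι → α}
    (hr : r ∈ P) (hr' : r' ∈ P) (h3 : hammingDist r p₀ = 3) (h3' : hammingDist r' p₀ = 3)
    {j a : ι} (hja : j ≠ a) (hj : r j = r' j) (hjp : r j ≠ p₀ j) (ha : r a ≠ p₀ a)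
    (ha' : r' a ≠ p₀ a) (hfr : f r = f r') : r = r' := by
  by_contra hne
  have hmin := hP.three_le_hammingDist hr hr' hne
  have hT : ∀ s ∈ ({j, a} : Finset ι), r s ≠ p₀ s ∧ r' s ≠ p₀ s := by
    simp [hjp, ← hj, ha, ha']
  by_cases hra : r a = r' a
  · have := hammingDist_add_card_add_card_le subset_rfl hT (by simp [hj, hra])
    rw [card_pair hja] at this
    omega
  · have := hammingDist_add_card_add_card_le (T' := {j}) (by simp) hT (by simp [hj])
    rw [card_pair hja, card_singleton] at this
    exact hf r hr r' hr' (by omega) hfr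

lemma IsOnePerfectHamming.exists_apply_eq [Fintype α] (hP : IsOnePerfectHamming P)
    {f : (ι → α) → α} (hf : ∀ c ∈ P, ∀ c' ∈ P, hammingDist c c' = 3 → f c ≠ f c')
    {p₀ : ι → α} (hp₀ : p₀ ∈ P) {j a : ι} (hja : j ≠ a) {β v : α} (hβ : β ≠ p₀ j)
    (hv : v ≠ f p₀) : ∃ r ∈ P, hammingDist r p₀ = 3 ∧ r j = β ∧ r a ≠ p₀ a ∧ f r = v := by
  -- The codewords covering `update (update p₀ j β) a b`, `b ≠ p₀ a`, have pairwise distinct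
  -- colours, all different from `f p₀`; there are as many of them as other colours.
  choose g hgP hg3 hgj hga using fun b (hb : b ∈ univ.erase (p₀ a)) =>
    hP.exists_hammingDist_eq_three hp₀ hja hβ (ne_of_mem_erase hb)
  obtain ⟨b, hb, hgv⟩ := surj_on_of_inj_on_of_card_le (t := univ.erase (f p₀))
    (fun b hb => f (g b hb))
    (fun b hb => mem_erase.mpr ⟨hf _ (hgP b hb) _ hp₀ (hg3 b hb), mem_univ _⟩)
    (fun b b' hb hb' h => by
      have := hP.eq_of_apply_eq hf (hgP b hb) (hgP b' hb') (hg3 b hb) (hg3 b' hb') hja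
        (by rw [hgj, hgj]) (by rw [hgj]; exact hβ) (by rw [hga]; exact ne_of_mem_erase hb)
        (by rw [hga]; exact ne_of_mem_erase hb') h
      rw [← hga b hb, ← hga b' hb', this])
    (by simp [card_erase_of_mem]) v (mem_erase.mpr ⟨hv, mem_univ _⟩)
  exact ⟨g b hb, hgP b hb, hg3 b hb, hgj b hb, by rw [hga]; exact ne_of_mem_erase hb, hgv.symm⟩

theorem IsOnePerfectHamming.odd_card [Fintype α] [Nonempty ι] [Nontrivial α]
    (hP : IsOnePerfectHamming P) {f : (ι → α) → α}
    (hf : ∀ c ∈ P, ∀ c' ∈ P, hammingDist c c' = 3 → f c ≠ f c') : Odd (Fintype.card ι) := by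
  classical
  obtain ⟨p₀, ⟨hp₀, -⟩, -⟩ := hP (fun _ => Classical.arbitrary α)
  obtain ⟨j⟩ := ‹Nonempty ι›
  obtain ⟨β, hβ⟩ := exists_ne (p₀ j)
  obtain ⟨v, hv⟩ := exists_ne (f p₀)
  set S : Finset (ι → α) := {r | r ∈ P ∧ hammingDist r p₀ = 3 ∧ r j = β ∧ f r = v}
  have hcount := card_mul_eq_card_mul (fun r a => r a ≠ p₀ a) (s := S) (t := univ.erase j)
    (m := 2) (n := 1) ?_ ?_
  · rw [card_erase_of_mem (mem_univ _), card_univ] at hcount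
    have hpos := Fintype.card_pos (α := ι)
    exact ⟨#S, by omega⟩
  · intro r hr
    obtain ⟨-, h3, hrj, -⟩ := (mem_filter.mp hr).2
    have h3' : #{a | r a ≠ p₀ a} = 3 := h3
    rw [bipartiteAbove, filter_erase, card_erase_of_mem (by simp [hrj, hβ]), h3']
  · intro a ha
    obtain ⟨r, hrP, h3, hrj, hra, hrv⟩ := hP.exists_apply_eq hf hp₀ (ne_of_mem_erase ha).symm hβ hv
    refine card_eq_one.mpr ⟨r, ?_⟩
    ext r'
    simp only [bipartiteBelow, S, mem_filter, mem_univ, true_and, mem_singleton]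
    constructor
    · rintro ⟨⟨hr'P, h3', hr'j, hr'v⟩, hr'a⟩
      exact hP.eq_of_apply_eq hf hr'P hrP h3' h3 (ne_of_mem_erase ha).symm (hr'j.trans hrj.symm)
        (hr'j ▸ hβ) hr'a hra (hr'v.trans hrv.symm)
    · rintro rfl
      exact ⟨⟨hrP, h3, hrj, hrv⟩, hra⟩

end Parity

lemma exists_eq_pow_of_dvd_pow {p m N d : ℕ} (hp : p.Prime) (hd : d ∣ (p ^ m) ^ N)
    (hd1 : p ^ m - 1 ∣ d - 1) : ∃ k, d = (p ^ m) ^ k := by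
  rw [← pow_mul, Nat.dvd_prime_pow hp] at hd
  obtain ⟨t, -, rfl⟩ := hd
  have hgcd : p ^ Nat.gcd m t - 1 = p ^ m - 1 := by
    rw [← Nat.pow_sub_one_gcd_pow_sub_one, Nat.gcd_eq_left hd1]
  have hpow := Nat.sub_one_cancel (pow_pos hp.pos _) (pow_pos hp.pos _) hgcd
  obtain ⟨k, rfl⟩ := Nat.gcd_eq_left_iff_dvd.mp (Nat.pow_right_injective hp.two_le hpow)
  exact ⟨k, pow_mul p m k⟩

lemma odd_iff_odd_of_one_add_mul_sub_one_eq_pow {q M k : ℕ} (hq : Odd q) (hq1 : 1 < q)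
    (h : 1 + M * (q - 1) = q ^ k) : Odd M ↔ Odd k := by
  have hgeom := geom_sum_mul_add (q - 1) k
  rw [Nat.sub_add_cancel hq1.le, ← h, add_comm, add_left_cancel_iff] at hgeom
  rw [← Nat.eq_of_mul_eq_mul_right (by omega) hgeom, odd_sum_iff_odd_card_odd,
    filter_true_of_mem fun i _ => hq.pow, card_range]

lemma exists_apply_ne_of_image_deleteCoord {α : Type*} [DecidableEq α] [Nonempty α] {n : ℕ}
    (i : Fin n) {C : Set (Fin n → α)}
    (hC : ∀ c ∈ C, ∀ c' ∈ C, c ≠ c' → 4 ≤ hammingDist c c') :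
    ∃ f : (Fin (n - 1) → α) → α, ∀ y ∈ deleteCoord i '' C, ∀ y' ∈ deleteCoord i '' C,
      hammingDist y y' = 3 → f y ≠ f y' := by
  have hinj : Set.InjOn (deleteCoord i) C := fun c hc c' hc' h => by
    by_contra hne
    have := hC c hc c' hc' hne
    rw [hammingDist_eq_deleteCoord_add i, h, hammingDist_self] at this
    split_ifs at this <;> omega
  refine ⟨fun y => Function.invFunOn (deleteCoord i) C y i, ?_⟩
  rintro _ ⟨c, hc, rfl⟩ _ ⟨c', hc', rfl⟩ h3 hf
  simp only [hinj.leftInvOn_invFunOn hc, hinj.leftInvOn_invFunOn hc'] at hf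
  have hne : c ≠ c' := by rintro rfl; simp at h3
  have := hC c hc c' hc' hne
  rw [hammingDist_eq_deleteCoord_add i, h3, if_neg (not_not.mpr hf)] at this
  omega

lemma le_dist_of_codeDist_eq {V : Type*} {G : SimpleGraph V} {C : Set V} {d : ℕ}
    (h : codeDist G C = d) {x y : V} (hx : x ∈ C) (hy : y ∈ C) (hne : x ≠ y) :
    d ≤ G.dist x y :=
  h ▸ Nat.sInf_le ⟨x, hx, y, hy, hne, rfl⟩

/-- Corollary 2 (Statement 14): if `q = p^m` is an odd prime power and `C` is an
extended `1`-perfect code in `H(n,q)`, then `n = (q^l + q − 2)/(q − 1)` for some odd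
positive integer `l`. -/
theorem statement14 (p m q n : ℕ) (hp : p.Prime) (hm : 1 ≤ m) (hq : q = p ^ m)
    (hodd : Odd q) (hn : 2 ≤ n) (C : Set (Fin n → ZMod q))
    (hC : IsExtOnePerfectH n q C) :
    ∃ l : ℕ, Odd l ∧ 0 < l ∧ n * (q - 1) = q ^ l + q - 2 := by
  classical
  obtain ⟨-, hdist, i, hperf⟩ := hC
  have hq1 : 1 < q := hq ▸ hp.one_lt.trans_le (Nat.le_self_pow (by omega) p)
  have : Fact (1 < q) := ⟨hq1⟩
  have : Nonempty (Fin (n - 1)) := ⟨⟨0, by omega⟩⟩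
  have hP : IsOnePerfectHamming (hammingProj i C) := by
    simpa only [IsOnePerfect, IsOnePerfectHamming, hammingGraph_dist] using hperf
  have hmin : ∀ c ∈ C, ∀ c' ∈ C, c ≠ c' → 4 ≤ hammingDist c c' := fun c hc c' hc' hne =>
    hammingGraph_dist c c' ▸ le_dist_of_codeDist_eq hdist hc hc' hne
  obtain ⟨f, hf⟩ := exists_apply_ne_of_image_deleteCoord i hmin
  have hM : Odd (n - 1) := by simpa using hP.odd_card hf
  have hcount := hP.card_mul_eq_card_pow
  simp only [Fintype.card_fin, ZMod.card] at hcount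
  obtain ⟨l, hl⟩ := exists_eq_pow_of_dvd_pow hp (hq ▸ Dvd.intro_left _ hcount)
    (by rw [← hq, Nat.add_sub_cancel_left]; exact Dvd.intro_left _ rfl)
  rw [← hq] at hl
  have hl_odd := (odd_iff_odd_of_one_add_mul_sub_one_eq_pow hodd hq1 hl).mp hM
  refine ⟨l, hl_odd, hl_odd.pos, ?_⟩
  obtain ⟨M, rfl⟩ : ∃ M, n = M + 1 := ⟨n - 1, by omega⟩
  rw [Nat.add_sub_cancel] at hl
  rw [add_mul, one_mul]
  omega
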